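/- Let S be symmetric, M symmetric positive definite, and let (λ, Φ) with MΦ ≠ 0 satisfy the residual bound ‖SΦ - λMΦ‖_{M^{-1}} ≤ ε‖SΦ‖_{M^{-1}}. If λ ≠ 0 and ε < 1, then there exists a true generalized eigenvalue λ_i of (S, M) with |λ_i - λ| ≤ ε‖SΦ‖_{M^{-1}} / ‖MΦ‖_{M^{-1}}. -/

import Mathlib

/-!
Write `M = Bᵀ B`. The substitution `y = B Φ` turns the pencil `(S, M)` into the symmetric matrix
`A = B⁻ᵀ S B⁻¹`, since `S - μ M = Bᵀ (A - μ) B`, and `B⁻ᵀ` carries the `M⁻¹`-norm to the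
Euclidean norm, `M Φ` to `y` and the residual `S Φ - λ M Φ` to `A y - λ y`. For a symmetric matrix,
expanding in an orthonormal eigenbasis gives `‖A y - λ y‖ ≥ minᵢ |μᵢ - λ| ‖y‖`.
-/

open Matrix

open scoped InnerProductSpace in
theorem LinearMap.IsSymmetric.exists_hasEigenvalue_abs_sub_mul_norm_le
    {𝕜 E : Type*} [RCLike 𝕜] [NormedAddCommGroup E] [InnerProductSpace 𝕜 E]
    [FiniteDimensional 𝕜 E] [Nontrivial E]
    {T : E →ₗ[𝕜] E} (hT : T.IsSymmetric) (lam : ℝ) (x : E) :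
    ∃ μ : ℝ, Module.End.HasEigenvalue T μ ∧ |μ - lam| * ‖x‖ ≤ ‖T x - (lam : 𝕜) • x‖ := by
  set b := hT.eigenvectorBasis rfl
  set ev := hT.eigenvalues rfl
  have : Nonempty (Fin (Module.finrank 𝕜 E)) := ⟨⟨0, Module.finrank_pos⟩⟩
  obtain ⟨j, hj⟩ := Finite.exists_min fun i => |ev i - lam|
  refine ⟨ev j, hT.hasEigenvalue_eigenvalues rfl j, ?_⟩
  have hinner (i) : ⟪b i, T x - (lam : 𝕜) • x⟫_𝕜 = ((ev i - lam : ℝ) : 𝕜) * ⟪b i, x⟫_𝕜 := by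
    rw [inner_sub_right, inner_smul_right, ← hT, hT.apply_eigenvectorBasis, inner_smul_left,
      RCLike.conj_ofReal]
    push_cast
    ring
  refine (pow_le_pow_iff_left₀ (by positivity) (norm_nonneg _) two_ne_zero).mp ?_
  rw [mul_pow, ← b.sum_sq_norm_inner_right x, ← b.sum_sq_norm_inner_right, Finset.mul_sum]
  gcongr with i
  rw [hinner, norm_mul, mul_pow, RCLike.norm_ofReal]
  exact mul_le_mul_of_nonneg_right (pow_le_pow_left₀ (abs_nonneg _) (hj i) 2) (by positivity)

theorem Matrix.IsHermitian.exists_det_sub_smul_one_eq_zero_abs_sub_mul_norm_le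
    {𝕜 ι : Type*} [RCLike 𝕜] [Fintype ι] [DecidableEq ι] [Nonempty ι]
    {A : Matrix ι ι 𝕜} (hA : A.IsHermitian) (lam : ℝ) (y : ι → 𝕜) :
    ∃ μ : ℝ, (A - (μ : 𝕜) • 1).det = 0 ∧
      |μ - lam| * ‖WithLp.toLp 2 y‖ ≤ ‖WithLp.toLp 2 (A *ᵥ y - (lam : 𝕜) • y)‖ := by
  obtain ⟨μ, hμ, hle⟩ := LinearMap.IsSymmetric.exists_hasEigenvalue_abs_sub_mul_norm_le
    (isSymmetric_toEuclideanLin_iff.mpr hA) lam (WithLp.toLp 2 y)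
  refine ⟨μ, ?_, hle⟩
  obtain ⟨v, hv⟩ := hμ.exists_hasEigenvector
  rw [← exists_mulVec_eq_zero_iff]
  refine ⟨WithLp.ofLp v, by simpa using hv.2, ?_⟩
  have := Module.End.mem_eigenspace_iff.mp hv.1
  rw [sub_mulVec, smul_mulVec, one_mulVec, sub_eq_zero]
  exact congrArg WithLp.ofLp this

section Pencil

variable {ι : Type*} [Fintype ι] [DecidableEq ι]

open scoped MatrixOrder in
theorem Matrix.PosDef.exists_isUnit_det_eq_transpose_mul_self {M : Matrix ι ι ℝ}
    (hM : M.PosDef) : ∃ B : Matrix ι ι ℝ, IsUnit B.det ∧ M = Bᵀ * B := by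
  obtain ⟨B, rfl⟩ := CStarAlgebra.nonneg_iff_eq_star_mul_self.mp hM.posSemidef.nonneg
  have hdet := hM.det_pos.ne'
  rw [star_eq_conjTranspose, conjTranspose_eq_transpose_of_trivial] at hdet ⊢
  refine ⟨B, isUnit_iff_ne_zero.mpr fun h => hdet ?_, rfl⟩
  rw [det_mul, h, mul_zero]

theorem Matrix.sqrt_dotProduct_inv_transpose_mul_self_mulVec (B : Matrix ι ι ℝ) (v : ι → ℝ) :
    √(v ⬝ᵥ ((Bᵀ * B)⁻¹ *ᵥ v)) = ‖WithLp.toLp 2 ((Bᵀ)⁻¹ *ᵥ v)‖ := by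
  rw [norm_eq_sqrt_real_inner, EuclideanSpace.inner_toLp_toLp, star_trivial, mul_inv_rev,
    ← mulVec_mulVec, dotProduct_mulVec, ← mulVec_transpose, transpose_nonsing_inv]

theorem Matrix.IsSymm.exists_det_sub_smul_eq_zero_abs_sub_mul_le [Nonempty ι]
    {S M : Matrix ι ι ℝ} (hS : S.IsSymm) (hM : M.PosDef) (lam : ℝ) (Φ : ι → ℝ) :
    ∃ μ : ℝ, (S - μ • M).det = 0 ∧
      |μ - lam| * √((M *ᵥ Φ) ⬝ᵥ (M⁻¹ *ᵥ (M *ᵥ Φ))) ≤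
        √((S *ᵥ Φ - lam • (M *ᵥ Φ)) ⬝ᵥ (M⁻¹ *ᵥ (S *ᵥ Φ - lam • (M *ᵥ Φ)))) := by
  obtain ⟨B, hB, rfl⟩ := hM.exists_isUnit_det_eq_transpose_mul_self
  have hBT : IsUnit Bᵀ.det := by rwa [det_transpose]
  set A := (Bᵀ)⁻¹ * S * B⁻¹ with hA_def
  have hA : A.IsHermitian := by
    rw [IsHermitian, conjTranspose_eq_transpose_of_trivial, hA_def, transpose_mul, transpose_mul,
      hS.eq, transpose_nonsing_inv, transpose_nonsing_inv, transpose_transpose, Matrix.mul_assoc]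
  obtain ⟨μ, hdet, hle⟩ := hA.exists_det_sub_smul_one_eq_zero_abs_sub_mul_norm_le lam (B *ᵥ Φ)
  have hpencil : S - μ • (Bᵀ * B) = Bᵀ * (A - μ • 1) * B := by
    rw [hA_def, Matrix.mul_sub, Matrix.sub_mul, Matrix.mul_smul, Matrix.smul_mul, Matrix.mul_one,
      ← Matrix.mul_assoc, ← Matrix.mul_assoc, mul_nonsing_inv _ hBT, Matrix.one_mul,
      Matrix.mul_assoc, nonsing_inv_mul _ hB, Matrix.mul_one]
  have hMΦ : (Bᵀ)⁻¹ *ᵥ ((Bᵀ * B) *ᵥ Φ) = B *ᵥ Φ := by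
    rw [mulVec_mulVec, ← Matrix.mul_assoc, nonsing_inv_mul _ hBT, Matrix.one_mul]
  have hres : (Bᵀ)⁻¹ *ᵥ (S *ᵥ Φ - lam • ((Bᵀ * B) *ᵥ Φ)) = A *ᵥ (B *ᵥ Φ) - lam • (B *ᵥ Φ) := by
    rw [mulVec_sub, mulVec_smul, hMΦ, hA_def, mulVec_mulVec, mulVec_mulVec, Matrix.mul_assoc,
      Matrix.mul_assoc, nonsing_inv_mul _ hB, Matrix.mul_one]
  refine ⟨μ, ?_, ?_⟩
  · rw [RCLike.ofReal_real_eq_id, id] at hdet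
    rw [hpencil, det_mul, det_mul, hdet, mul_zero, zero_mul]
  · rw [sqrt_dotProduct_inv_transpose_mul_self_mulVec,
      sqrt_dotProduct_inv_transpose_mul_self_mulVec, hMΦ, hres]
    exact hle

end Pencil

theorem residual_bound_implies_eigenvalue_bound_general {n : ℕ}
    (S M : Matrix (Fin n) (Fin n) ℝ) (hS : S.IsSymm) (hM : M.PosDef)
    (lam ε : ℝ) (Φ : Fin n → ℝ)
    (normMinv : (Fin n → ℝ) → ℝ)
    (hnorm : ∀ v, normMinv v = Real.sqrt (v ⬝ᵥ (M⁻¹ *ᵥ v)))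
    (hMΦ : M *ᵥ Φ ≠ 0)
    (hres : normMinv (S *ᵥ Φ - lam • (M *ᵥ Φ)) ≤ ε * normMinv (S *ᵥ Φ)) :
    ∃ lami : ℝ, (S - lami • M).det = 0 ∧
      |lami - lam| ≤ ε * normMinv (S *ᵥ Φ) / normMinv (M *ᵥ Φ) := by
  obtain ⟨i, -⟩ := Function.ne_iff.mp hMΦ
  have : Nonempty (Fin n) := ⟨i⟩
  obtain ⟨μ, hdet, hle⟩ := hS.exists_det_sub_smul_eq_zero_abs_sub_mul_le hM lam Φ
  have hMΦ_pos : 0 < normMinv (M *ᵥ Φ) := by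
    rw [hnorm, Real.sqrt_pos]
    simpa only [star_trivial] using hM.inv.dotProduct_mulVec_pos hMΦ
  refine ⟨μ, hdet, (le_div_iff₀ hMΦ_pos).mpr ?_⟩
  calc |μ - lam| * normMinv (M *ᵥ Φ) ≤ normMinv (S *ᵥ Φ - lam • (M *ᵥ Φ)) := by
        simpa only [hnorm] using hle
    _ ≤ ε * normMinv (S *ᵥ Φ) := hres

/-- The residual convergence test of SIM in the `M⁻¹`-norm guarantees the
existence of a true generalized eigenvalue close to the approximate one. -/
theorem residual_bound_implies_eigenvalue_bound {n : ℕ}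
    (S M : Matrix (Fin n) (Fin n) ℝ) (hS : S.IsSymm) (hM : M.PosDef)
    (lam ε : ℝ) (Φ : Fin n → ℝ)
    (normMinv : (Fin n → ℝ) → ℝ)
    (hnorm : ∀ v, normMinv v = Real.sqrt (v ⬝ᵥ (M⁻¹ *ᵥ v)))
    (hMΦ : M *ᵥ Φ ≠ 0)
    (hres : normMinv (S *ᵥ Φ - lam • (M *ᵥ Φ)) ≤ ε * normMinv (S *ᵥ Φ))
    (hlam : lam ≠ 0) (hε : ε < 1) :
    ∃ lami : ℝ, (S - lami • M).det = 0 ∧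
      |lami - lam| ≤ ε * normMinv (S *ᵥ Φ) / normMinv (M *ᵥ Φ) :=
  residual_bound_implies_eigenvalue_bound_general S M hS hM lam ε Φ normMinv hnorm hMΦ hres
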